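/- Let X, Y be real m×n matrices (columns in ℝ^n thought of as data). Let Z = Y · P, where P is the orthogonal projection onto the row space of X (i.e., P = X⁺ X). Let P_k denote the orthogonal projection onto the span of the top k left singular vectors of Z. Then A★ = P_k · Y · X⁺ is a minimizer of ‖Y − A X‖_F over all n×n matrices A with rank(A) ≤ k (here ‖·‖_F is the Frobenius norm). -/

import Mathlib

open scoped BigOperators Matrix

noncomputable def frobNorm {n m : ℕ} (M : Matrix (Fin n) (Fin m) ℝ) : ℝ :=
  Real.sqrt (∑ i, ∑ j, (M i j) ^ 2)

def IsMoorePenrose {n m : ℕ} (X : Matrix (Fin n) (Fin m) ℝ)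
    (Xp : Matrix (Fin m) (Fin n) ℝ) : Prop :=
  X * Xp * X = X ∧ Xp * X * Xp = Xp ∧ (X * Xp)ᵀ = X * Xp ∧ (Xp * X)ᵀ = Xp * X

/-!
Let `P = X⁺X`, the orthogonal projector onto the row space of `X`. Since `(Y - Z) P = 0` while
`(Z - A X) P = Z - A X`, Pythagoras gives `‖Y - A X‖² = ‖Y - Z‖² + ‖Z - A X‖²`, and `A★ X = P_k Z`;
so it suffices to show `‖Z - P_k Z‖ ≤ ‖Z - A X‖`. If `Q` is the orthogonal projector onto the
column space of `A`, then `Q A X = A X`, hence `‖Z - A X‖ ≥ ‖Z - Q Z‖`, and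
`‖Z - Q Z‖² = tr (Z Zᵀ) - tr (Q Z Zᵀ)`. In the eigenbasis `u` of `Z Zᵀ`,
`tr (Q Z Zᵀ) = ∑ σᵢ² tᵢ` with `tᵢ = uᵢᵀ Q uᵢ ∈ [0, 1]` and `∑ tᵢ = tr Q = rank A ≤ k`; for
decreasing `σᵢ²` such a sum is at most `∑_{i < k} σᵢ² = tr (P_k Z Zᵀ)` (Ky Fan).
-/

open Matrix Finset

section Projection

variable {n : Type*} [Fintype n]

theorem Matrix.isStarProjection_iff_transpose {Q : Matrix n n ℝ} :
    IsStarProjection Q ↔ Q * Q = Q ∧ Qᵀ = Q := by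
  simp [isStarProjection_iff', star_eq_conjTranspose]

theorem IsStarProjection.dotProduct_mulVec_nonneg {Q : Matrix n n ℝ} (hQ : IsStarProjection Q)
    (v : n → ℝ) : 0 ≤ v ⬝ᵥ Q *ᵥ v := by
  obtain ⟨hQQ, hQt⟩ := isStarProjection_iff_transpose.1 hQ
  have hsq : v ⬝ᵥ Q *ᵥ v = (Q *ᵥ v) ⬝ᵥ (Q *ᵥ v) := by
    conv_lhs => rw [← hQQ, ← mulVec_mulVec]
    nth_rw 1 [← hQt]
    rw [dotProduct_mulVec, vecMul_transpose]
  rw [hsq]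
  exact Finset.sum_nonneg fun i _ => mul_self_nonneg _

variable [DecidableEq n]

theorem IsStarProjection.dotProduct_mulVec_le {Q : Matrix n n ℝ} (hQ : IsStarProjection Q)
    (v : n → ℝ) : v ⬝ᵥ Q *ᵥ v ≤ v ⬝ᵥ v := by
  have h := hQ.one_sub.dotProduct_mulVec_nonneg v
  rwa [sub_mulVec, one_mulVec, dotProduct_sub, sub_nonneg] at h

theorem Matrix.trace_eq_rank_of_isIdempotentElem {K : Type*} [Field K] {Q : Matrix n n K}
    (hQ : IsIdempotentElem Q) : Q.trace = Q.rank := by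
  have h : IsIdempotentElem (toLin' Q) := hQ.map toLinAlgEquiv'
  rw [(trace_toLin'_eq Q).symm, ((LinearMap.isProj_range_iff_isIdempotentElem _).2 h).trace,
    rank]
  rfl

theorem Matrix.rank_eq_finrank_range_toEuclideanLin {𝕜 : Type*} [RCLike 𝕜] (A : Matrix n n 𝕜) :
    A.rank = Module.finrank 𝕜 (LinearMap.range (toEuclideanLin A)) :=
  A.rank_eq_finrank_range_toLin (EuclideanSpace.basisFun n 𝕜).toBasis
    (EuclideanSpace.basisFun n 𝕜).toBasis

theorem Matrix.exists_isStarProjection_mul_eq_self {𝕜 : Type*} [RCLike 𝕜] (A : Matrix n n 𝕜) :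
    ∃ Q : Matrix n n 𝕜, IsStarProjection Q ∧ Q * A = A ∧ Q.rank = A.rank := by
  let V := LinearMap.range (toEuclideanLin A)
  let Q := (toEuclideanCLM (n := n) (𝕜 := 𝕜)).symm V.starProjection
  have hQ : toEuclideanCLM (n := n) (𝕜 := 𝕜) Q = V.starProjection := by simp [Q]
  refine ⟨Q, isStarProjection_starProjection.map (toEuclideanCLM (n := n) (𝕜 := 𝕜)).symm,
    ext_iff_mulVec.2 fun x => ?_, ?_⟩
  · rw [← mulVec_mulVec, ← WithLp.ofLp_toLp 2 (A *ᵥ x), ← ofLp_toEuclideanCLM, hQ]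
    exact congrArg WithLp.ofLp (Submodule.starProjection_eq_self_iff.2
      (LinearMap.mem_range_self (toEuclideanLin A) (WithLp.toLp 2 x)))
  · rw [rank_eq_finrank_range_toEuclideanLin, rank_eq_finrank_range_toEuclideanLin,
      ← coe_toEuclideanCLM_eq_toEuclideanLin, hQ]
    exact congrArg (fun W : Submodule 𝕜 _ => Module.finrank 𝕜 W) V.range_starProjection

end Projection

section RankOne

variable {ι n : Type*} [Fintype n]

theorem isStarProjection_sum_vecMulVec [DecidableEq ι] {w : ι → n → ℝ}
    (hw : ∀ i j, w i ⬝ᵥ w j = if i = j then 1 else 0) (S : Finset ι) :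
    IsStarProjection (∑ i ∈ S, vecMulVec (w i) (w i)) := by
  refine isStarProjection_iff_transpose.2 ⟨?_, ?_⟩
  · rw [Finset.sum_mul_sum]
    refine Finset.sum_congr rfl fun i hi => ?_
    simp_rw [vecMulVec_mul_vecMulVec, vecMulVec_smul, hw, ite_smul, one_smul, zero_smul]
    rw [Finset.sum_ite_eq, if_pos hi]
  · simp only [transpose_sum, transpose_vecMulVec]

theorem rank_sum_vecMulVec [DecidableEq ι] {w : ι → n → ℝ}
    (hw : ∀ i j, w i ⬝ᵥ w j = if i = j then 1 else 0) (S : Finset ι) :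
    (∑ i ∈ S, vecMulVec (w i) (w i)).rank = #S := by
  classical
  apply Nat.cast_injective (R := ℝ)
  rw [← trace_eq_rank_of_isIdempotentElem (isStarProjection_sum_vecMulVec hw S).isIdempotentElem,
    trace_sum]
  simp [hw]

theorem trace_sum_vecMulVec_mul {u : ι → n → ℝ} (hu : ∀ i, u i ⬝ᵥ u i = 1)
    {M : Matrix n n ℝ} {μ : ι → ℝ} (hM : ∀ i, M *ᵥ u i = μ i • u i) (S : Finset ι) :
    ((∑ i ∈ S, vecMulVec (u i) (u i)) * M).trace = ∑ i ∈ S, μ i := by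
  rw [Finset.sum_mul, trace_sum]
  refine Finset.sum_congr rfl fun i _ => ?_
  rw [trace_mul_comm, mul_vecMulVec, hM, trace_vecMulVec, smul_dotProduct, hu, smul_eq_mul,
    mul_one]

variable [DecidableEq n] {u : n → n → ℝ}

theorem sum_vecMulVec_eq_one (hu : ∀ i j, u i ⬝ᵥ u j = if i = j then 1 else 0) :
    ∑ i, vecMulVec (u i) (u i) = 1 := by
  have hUUt : of u * (of u)ᵀ = 1 := by
    ext i j
    simpa [mul_apply, one_apply, dotProduct] using hu i j
  calc ∑ i, vecMulVec (u i) (u i) = (of u)ᵀ * of u := by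
        ext a b
        simp [mul_apply, Matrix.sum_apply, vecMulVec_apply]
    _ = 1 := mul_eq_one_comm.1 hUUt

theorem trace_mul_eq_sum_mul_dotProduct (hu : ∀ i j, u i ⬝ᵥ u j = if i = j then 1 else 0)
    {M : Matrix n n ℝ} {μ : n → ℝ} (hM : ∀ i, M *ᵥ u i = μ i • u i) (Q : Matrix n n ℝ) :
    (Q * M).trace = ∑ i, μ i * (u i ⬝ᵥ Q *ᵥ u i) := by
  rw [← Matrix.mul_one (Q * M), ← sum_vecMulVec_eq_one hu, Matrix.mul_sum, trace_sum]
  refine Finset.sum_congr rfl fun i _ => ?_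
  rw [mul_vecMulVec, ← mulVec_mulVec, hM, mulVec_smul, trace_vecMulVec, smul_dotProduct,
    smul_eq_mul, dotProduct_comm]

end RankOne

section KyFan

variable {R : Type*} [CommRing R] [LinearOrder R] [IsStrictOrderedRing R]

theorem sum_mul_le_sum_of_threshold {ι : Type*} [Fintype ι] (F : Finset ι) {s t : ι → R} {c : R}
    (hc : 0 ≤ c) (hsF : ∀ i ∈ F, c ≤ s i) (hsFc : ∀ i ∉ F, s i ≤ c) (ht0 : ∀ i, 0 ≤ t i)
    (ht1 : ∀ i, t i ≤ 1) (ht : ∑ i, t i ≤ #F) :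
    ∑ i, s i * t i ≤ ∑ i ∈ F, s i := by
  classical
  have key : ∑ i ∈ F, s i - ∑ i, s i * t i =
      ∑ i, (s i - c) * ((if i ∈ F then 1 else 0) - t i) + c * (#F - ∑ i, t i) := by
    simp only [mul_sub, sub_mul, Finset.sum_sub_distrib, mul_ite, mul_one, mul_zero,
      Finset.sum_ite_mem, Finset.univ_inter, ← Finset.mul_sum, Finset.sum_const, nsmul_eq_mul]
    ring
  have hterm : ∀ i, 0 ≤ (s i - c) * ((if i ∈ F then 1 else 0) - t i) := by
    intro i
    by_cases hi : i ∈ F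
    · simpa [hi] using mul_nonneg (sub_nonneg.2 (hsF i hi)) (sub_nonneg.2 (ht1 i))
    · simpa [hi] using
        mul_nonneg_of_nonpos_of_nonpos (sub_nonpos.2 (hsFc i hi)) (neg_nonpos.2 (ht0 i))
  have hsum := Finset.sum_nonneg fun i (_ : i ∈ univ) => hterm i
  linarith [mul_nonneg hc (sub_nonneg.2 ht)]

theorem sum_mul_le_sum_filter_lt {n k : ℕ} {s t : Fin n → R} (hs : Antitone s)
    (hs0 : ∀ i, 0 ≤ s i) (ht0 : ∀ i, 0 ≤ t i) (ht1 : ∀ i, t i ≤ 1) (ht : ∑ i, t i ≤ k) :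
    ∑ i, s i * t i ≤ ∑ i ∈ univ.filter (fun i : Fin n => (i : ℕ) < k), s i := by
  by_cases hk : k < n
  · refine sum_mul_le_sum_of_threshold _ (hs0 ⟨k, hk⟩) (fun i hi => hs ?_)
      (fun i hi => hs ?_) ht0 ht1 ?_
    · simpa [Fin.le_def] using (Finset.mem_filter.1 hi).2.le
    · simpa [Fin.le_def] using hi
    · rwa [Fin.card_filter_val_lt, min_eq_right hk.le]
  · rw [Finset.filter_true_of_mem fun i _ => by omega]
    exact Finset.sum_le_sum fun i _ => mul_le_of_le_one_right (hs0 i) (ht1 i)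

theorem trace_mul_le_sum_filter_lt {n k : ℕ} {u : Fin n → Fin n → ℝ}
    (hu : ∀ i j, u i ⬝ᵥ u j = if i = j then 1 else 0) {M : Matrix (Fin n) (Fin n) ℝ}
    {μ : Fin n → ℝ} (hM : ∀ i, M *ᵥ u i = μ i • u i) (hμ : Antitone μ) (hμ0 : ∀ i, 0 ≤ μ i)
    {Q : Matrix (Fin n) (Fin n) ℝ} (hQ : IsStarProjection Q) (hQk : Q.trace ≤ k) :
    (Q * M).trace ≤ ∑ i ∈ univ.filter (fun i : Fin n => (i : ℕ) < k), μ i := by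
  have htrace : ∑ i, u i ⬝ᵥ Q *ᵥ u i = Q.trace := by
    simpa using (trace_mul_eq_sum_mul_dotProduct hu (M := 1) (μ := 1) (by simp) Q).symm
  rw [trace_mul_eq_sum_mul_dotProduct hu hM]
  refine sum_mul_le_sum_filter_lt hμ hμ0 (fun i => hQ.dotProduct_mulVec_nonneg _)
    (fun i => ?_) (htrace ▸ hQk)
  simpa [hu] using hQ.dotProduct_mulVec_le (u i)

end KyFan

section Frobenius

variable {n m : ℕ}

theorem frobNorm_nonneg (M : Matrix (Fin n) (Fin m) ℝ) : 0 ≤ frobNorm M :=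
  Real.sqrt_nonneg _

theorem frobNorm_sq (M : Matrix (Fin n) (Fin m) ℝ) : frobNorm M ^ 2 = (Mᵀ * M).trace := by
  rw [frobNorm, Real.sq_sqrt (by positivity), trace, Finset.sum_comm]
  simp [mul_apply, sq]

theorem frobNorm_add_sq_of_trace_eq_zero {M N : Matrix (Fin n) (Fin m) ℝ}
    (h : (Mᵀ * N).trace = 0) : frobNorm (M + N) ^ 2 = frobNorm M ^ 2 + frobNorm N ^ 2 := by
  have h' : (Nᵀ * M).trace = 0 := by
    rw [← trace_transpose, transpose_mul, transpose_transpose, h]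
  rw [frobNorm_sq, frobNorm_sq, frobNorm_sq, transpose_add, Matrix.add_mul, Matrix.mul_add,
    Matrix.mul_add, trace_add, trace_add, trace_add, h, h']
  ring

theorem frobNorm_add_sq_of_mul_eq_zero_left {Q : Matrix (Fin n) (Fin n) ℝ}
    (hQ : IsStarProjection Q) {M N : Matrix (Fin n) (Fin m) ℝ} (hM : Q * M = 0) (hN : Q * N = N) :
    frobNorm (M + N) ^ 2 = frobNorm M ^ 2 + frobNorm N ^ 2 := by
  apply frobNorm_add_sq_of_trace_eq_zero
  rw [← hN, ← Matrix.mul_assoc, ← (isStarProjection_iff_transpose.1 hQ).2, ← transpose_mul, hM,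
    transpose_zero, Matrix.zero_mul, trace_zero]

theorem frobNorm_add_sq_of_mul_eq_zero_right {P : Matrix (Fin m) (Fin m) ℝ}
    (hP : IsStarProjection P) {M N : Matrix (Fin n) (Fin m) ℝ} (hM : M * P = 0) (hN : N * P = N) :
    frobNorm (M + N) ^ 2 = frobNorm M ^ 2 + frobNorm N ^ 2 := by
  apply frobNorm_add_sq_of_trace_eq_zero
  rw [← hN, ← Matrix.mul_assoc, trace_mul_comm, ← Matrix.mul_assoc,
    ← (isStarProjection_iff_transpose.1 hP).2, ← transpose_mul, hM, transpose_zero,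
    Matrix.zero_mul, trace_zero]

variable {Q : Matrix (Fin n) (Fin n) ℝ}

theorem frobNorm_sub_mul_self_sq (hQ : IsStarProjection Q) (Z : Matrix (Fin n) (Fin m) ℝ) :
    frobNorm (Z - Q * Z) ^ 2 = (Z * Zᵀ).trace - (Q * (Z * Zᵀ)).trace := by
  obtain ⟨hQQ, hQt⟩ := isStarProjection_iff_transpose.1 hQ
  have hsplit := frobNorm_add_sq_of_mul_eq_zero_left hQ (M := Z - Q * Z) (N := Q * Z)
    (by rw [Matrix.mul_sub, ← Matrix.mul_assoc, hQQ, sub_self]) (by rw [← Matrix.mul_assoc, hQQ])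
  have hQZ : frobNorm (Q * Z) ^ 2 = (Q * (Z * Zᵀ)).trace := by
    rw [frobNorm_sq, transpose_mul, hQt, Matrix.mul_assoc, ← Matrix.mul_assoc Q, hQQ,
      trace_mul_comm, Matrix.mul_assoc]
  rw [sub_add_cancel, frobNorm_sq, trace_mul_comm, hQZ] at hsplit
  linarith

theorem frobNorm_sub_mul_self_le (hQ : IsStarProjection Q) {B : Matrix (Fin n) (Fin m) ℝ}
    (hB : Q * B = B) (Z : Matrix (Fin n) (Fin m) ℝ) :
    frobNorm (Z - Q * Z) ≤ frobNorm (Z - B) := by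
  obtain ⟨hQQ, -⟩ := isStarProjection_iff_transpose.1 hQ
  have hsplit := frobNorm_add_sq_of_mul_eq_zero_left hQ (M := Z - Q * Z) (N := Q * Z - B)
    (by rw [Matrix.mul_sub, ← Matrix.mul_assoc, hQQ, sub_self])
    (by rw [Matrix.mul_sub, ← Matrix.mul_assoc, hQQ, hB])
  rw [sub_add_sub_cancel] at hsplit
  refine (pow_le_pow_iff_left₀ (frobNorm_nonneg _) (frobNorm_nonneg _) two_ne_zero).1 ?_
  exact hsplit ▸ le_add_of_nonneg_right (sq_nonneg _)

end Frobenius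

namespace IsMoorePenrose

variable {n m : ℕ} {X : Matrix (Fin n) (Fin m) ℝ} {Xp : Matrix (Fin m) (Fin n) ℝ}

theorem isStarProjection (h : IsMoorePenrose X Xp) : IsStarProjection (Xp * X) :=
  isStarProjection_iff_transpose.2 ⟨by rw [← Matrix.mul_assoc, h.2.1], h.2.2.2⟩

theorem frobNorm_sub_mul_sq (h : IsMoorePenrose X Xp) (Y : Matrix (Fin n) (Fin m) ℝ)
    (C : Matrix (Fin n) (Fin n) ℝ) :
    frobNorm (Y - C * X) ^ 2 =
      frobNorm (Y - Y * (Xp * X)) ^ 2 + frobNorm (Y * (Xp * X) - C * X) ^ 2 := by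
  obtain ⟨hPP, -⟩ := isStarProjection_iff_transpose.1 h.isStarProjection
  have hXP : X * (Xp * X) = X := by rw [← Matrix.mul_assoc, h.1]
  rw [← frobNorm_add_sq_of_mul_eq_zero_right h.isStarProjection, sub_add_sub_cancel]
  · rw [Matrix.sub_mul, Matrix.mul_assoc, hPP, sub_self]
  · rw [Matrix.sub_mul, Matrix.mul_assoc, hPP, Matrix.mul_assoc, hXP]

end IsMoorePenrose

/-- Closed-form solution of the low-rank constrained least-squares problem:
`A★ = P_k Y X⁺` minimizes `‖Y − A X‖_F` over matrices of rank ≤ k, where `P_k`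
projects onto the span of the top-k left singular vectors of `Z = Y X⁺ X`. -/
theorem stmt2 {n m : ℕ} (k : ℕ)
    (X Y : Matrix (Fin n) (Fin m) ℝ) (Xp : Matrix (Fin m) (Fin n) ℝ)
    (hXp : IsMoorePenrose X Xp)
    (Z : Matrix (Fin n) (Fin m) ℝ) (hZ : Z = Y * (Xp * X))
    (σ : Fin n → ℝ) (hσdec : Antitone σ) (hσpos : ∀ i, 0 ≤ σ i)
    (u : Fin n → Fin n → ℝ)
    (huon : ∀ i j, u i ⬝ᵥ u j = if i = j then (1 : ℝ) else 0)
    (heig : ∀ i, (Z * Zᵀ) *ᵥ u i = (σ i ^ 2) • u i)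
    (Pk : Matrix (Fin n) (Fin n) ℝ)
    (hPk : Pk = ∑ i ∈ Finset.univ.filter (fun i : Fin n => (i : ℕ) < k),
      Matrix.vecMulVec (u i) (u i)) :
    (Pk * Y * Xp).rank ≤ k ∧
    ∀ A : Matrix (Fin n) (Fin n) ℝ, A.rank ≤ k →
      frobNorm (Y - (Pk * Y * Xp) * X) ≤ frobNorm (Y - A * X) := by
  have hPkproj : IsStarProjection Pk := hPk ▸ isStarProjection_sum_vecMulVec huon _
  have hfit : Pk * Y * Xp * X = Pk * Z := by rw [hZ]; simp only [Matrix.mul_assoc]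
  have hσsq : Antitone (σ · ^ 2) := fun i j hij => pow_le_pow_left₀ (hσpos j) (hσdec hij) 2
  refine ⟨?_, fun A hA => ?_⟩
  · calc (Pk * Y * Xp).rank ≤ Pk.rank := (rank_mul_le_left _ _).trans (rank_mul_le_left _ _)
      _ ≤ k := by simp [hPk, rank_sum_vecMulVec huon, Fin.card_filter_val_lt]
  obtain ⟨Q, hQ, hQA, hQrank⟩ := exists_isStarProjection_mul_eq_self A
  have hQk : Q.trace ≤ k := by
    rw [trace_eq_rank_of_isIdempotentElem hQ.isIdempotentElem, hQrank]
    exact_mod_cast hA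
  have hKyFan : (Q * (Z * Zᵀ)).trace ≤ (Pk * (Z * Zᵀ)).trace := by
    rw [hPk, trace_sum_vecMulVec_mul (fun i => by simp [huon]) heig]
    exact trace_mul_le_sum_filter_lt huon heig hσsq (fun i => sq_nonneg _) hQ hQk
  have hQAX : Q * (A * X) = A * X := by rw [← Matrix.mul_assoc, hQA]
  refine (pow_le_pow_iff_left₀ (frobNorm_nonneg _) (frobNorm_nonneg _) two_ne_zero).1 ?_
  rw [hXp.frobNorm_sub_mul_sq Y A, hXp.frobNorm_sub_mul_sq Y (Pk * Y * Xp), ← hZ, hfit,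
    add_le_add_iff_left]
  calc frobNorm (Z - Pk * Z) ^ 2 = (Z * Zᵀ).trace - (Pk * (Z * Zᵀ)).trace :=
        frobNorm_sub_mul_self_sq hPkproj Z
    _ ≤ (Z * Zᵀ).trace - (Q * (Z * Zᵀ)).trace := sub_le_sub_left hKyFan _
    _ = frobNorm (Z - Q * Z) ^ 2 := (frobNorm_sub_mul_self_sq hQ Z).symm
    _ ≤ frobNorm (Z - A * X) ^ 2 :=
        pow_le_pow_left₀ (frobNorm_nonneg _) (frobNorm_sub_mul_self_le hQ hQAX Z) 2
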